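/- Let r, t ∈ ℕ, p ∈ GP_r and q ∈ GP_t. Then (1) the function n ↦ p(n)⌈q(n)⌉ is ≃_{r+t}-equivalent to the function n ↦ (p(n) − ⌈p(n)⌉)·q(n); and (2) if q₁, …, q_k ∈ GP_t satisfy q(n) = Σ_{i=1}^k q_i(n) for all n, then the function n ↦ p(n)⌈q(n)⌉ is ≃_{r+t}-equivalent to the function n ↦ Σ_{i=1}^k p(n)⌈q_i(n)⌉. -/

import Mathlib

/-- `‖a‖`: the distance from a real number `a` to the nearest integer. -/
noncomputable def distToInt (a : ℝ) : ℝ := sInf (Set.range fun m : ℤ => |a - (m : ℝ)|)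

/-- `⌈a⌉`: the least integer `m` with `|a − m| = ‖a‖`. -/
noncomputable def nint (a : ℝ) : ℤ := sInf { m : ℤ | |a - (m : ℝ)| = distToInt a }

/-- The class `GP d` of generalized polynomials `ℤ → ℝ` of degree `≤ d`:
`GP 1` is generated by the maps `n ↦ a·n`; each `GP d` contains `GP e` for `e < d` and
the functions `n ↦ a₀ n^{p₀} ⌈f₁(n)⌉⋯⌈f_k(n)⌉` with `f_l ∈ GP (p l)` and
`p₀ + Σ p_l = d`; and each `GP d` is closed under `⌈·⌉`, scalar multiples and sums.
(No constructor produces `GP 0`, so the degrees `p l` are automatically `≥ 1`.) -/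
inductive GP : ℕ → (ℤ → ℝ) → Prop where
  | base (a : ℝ) : GP 1 (fun n => a * (n : ℝ))
  | incl {d e : ℕ} {f : ℤ → ℝ} (hf : GP e f) (hed : e < d) : GP d f
  | mono {d : ℕ} (a₀ : ℝ) (p₀ k : ℕ) (p : Fin k → ℕ) (f : Fin k → ℤ → ℝ)
      (hf : ∀ l, GP (p l) (f l)) (hsum : p₀ + ∑ l, p l = d) (hd : 1 ≤ d) :
      GP d (fun n => a₀ * (n : ℝ) ^ p₀ * ∏ l, (nint (f l n) : ℝ))
  | ceil {d : ℕ} {f : ℤ → ℝ} (hf : GP d f) : GP d (fun n => (nint (f n) : ℝ))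
  | smul {d : ℕ} {f : ℤ → ℝ} (c : ℝ) (hf : GP d f) : GP d (fun n => c * f n)
  | add {d : ℕ} {f g : ℤ → ℝ} (hf : GP d f) (hg : GP d g) : GP d (fun n => f n + g n)

/-- `L(a₁,…,a_ℓ)`: `L(a₁) = a₁` and `L(a₁,a₂,…,a_ℓ) = a₁⌈L(a₂,…,a_ℓ)⌉`. -/
noncomputable def Lfun : List ℝ → ℝ
  | [] => 0
  | [a] => a
  | a :: b :: rest => a * (nint (Lfun (b :: rest)) : ℝ)

/-- The class `SGP d` of special generalized polynomials of degree `≤ d`: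
the functions `n ↦ L(n^{j₁}a₁,…,n^{j_ℓ}a_ℓ)` with `1 ≤ ℓ ≤ d`, `j_t ≥ 1`, `Σ j_t ≤ d`. -/
def SGP (d : ℕ) (f : ℤ → ℝ) : Prop :=
  ∃ (ℓ : ℕ) (a : Fin ℓ → ℝ) (j : Fin ℓ → ℕ),
    1 ≤ ℓ ∧ ℓ ≤ d ∧ (∀ t, 1 ≤ j t) ∧ (∑ t, j t) ≤ d ∧
    f = fun n : ℤ => Lfun (List.ofFn fun t => (n : ℝ) ^ (j t) * a t)

/-- The family `F_{GP_d}` of subsets of `ℤ` containing some set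
`⋂_{i=1}^k {n : ‖P_i(n)‖ < ε_i}` with `P_i ∈ GP d` and `ε_i > 0`. -/
def FGP (d : ℕ) : Set (Set ℤ) :=
  { A | ∃ (k : ℕ) (P : Fin k → ℤ → ℝ) (ε : Fin k → ℝ),
      1 ≤ k ∧ (∀ i, GP d (P i)) ∧ (∀ i, 0 < ε i) ∧
      (⋂ i, { n : ℤ | distToInt (P i n) < ε i }) ⊆ A }

/-- The family `F_{SGP_d}`, defined like `F_{GP_d}` with `SGP d` in place of `GP d`. -/
def FSGP (d : ℕ) : Set (Set ℤ) :=
  { A | ∃ (k : ℕ) (P : Fin k → ℤ → ℝ) (ε : Fin k → ℝ),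
      1 ≤ k ∧ (∀ i, SGP d (P i)) ∧ (∀ i, 0 < ε i) ∧
      (⋂ i, { n : ℤ | distToInt (P i n) < ε i }) ⊆ A }

/-- `SW d`: the functions `n ↦ ∏_{i=1}^ℓ (w_i(n) − ⌈w_i(n)⌉)` with `ℓ ≥ 2`, `r_i ≥ 1`,
`w_i ∈ GP (r i)` and `r₁+⋯+r_ℓ ≤ d`. -/
def SW (d : ℕ) (g : ℤ → ℝ) : Prop :=
  ∃ (ℓ : ℕ) (r : Fin ℓ → ℕ) (w : Fin ℓ → ℤ → ℝ),
    2 ≤ ℓ ∧ (∀ i, 1 ≤ r i) ∧ (∀ i, GP (r i) (w i)) ∧ (∑ i, r i) ≤ d ∧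
    g = fun n : ℤ => ∏ i, (w i n - (nint (w i n) : ℝ))

/-- `W d`: finite real linear combinations of functions in `SW d`. -/
def Wset (d : ℕ) : Set (ℤ → ℝ) :=
  { p | ∃ (m : ℕ) (c : Fin m → ℝ) (g : Fin m → ℤ → ℝ),
      1 ≤ m ∧ (∀ j, SW d (g j)) ∧ p = fun n : ℤ => ∑ j, c j * g j n }

/-- `q₁ ≃_d q₂`: there exist `h₁ ∈ GP (d−1)` and `h₂ ∈ W d` with
`q₂(n) − q₁(n) − h₁(n) − h₂(n) ∈ ℤ` for every `n`. -/
def GPequiv (d : ℕ) (q₁ q₂ : ℤ → ℝ) : Prop :=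
  ∃ h₁ h₂ : ℤ → ℝ, GP (d - 1) h₁ ∧ h₂ ∈ Wset d ∧
    ∀ n : ℤ, ∃ m : ℤ, q₂ n - q₁ n - h₁ n - h₂ n = (m : ℝ)

/-!
Both equivalences hold with `h₁ = 0`. For (1), `(p - ⌈p⌉) q - p ⌈q⌉` differs from
`(p - ⌈p⌉)(q - ⌈q⌉) ∈ W` by the integer `-⌈p⌉⌈q⌉`. For (2), `g = Σ (qᵢ - ⌈qᵢ⌉) ∈ GP_t` differs
from `q` by an integer, so `⌈q⌉ = ⌈g⌉ + Σ ⌈qᵢ⌉` and `Σ p⌈qᵢ⌉ - p⌈q⌉ = -p⌈g⌉`. By (1) this is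
congruent modulo `W + ℤ` to `-(p - ⌈p⌉) g = -Σ (p - ⌈p⌉)(qᵢ - ⌈qᵢ⌉)`, which lies in `W`.
-/

lemma distToInt_eq_abs_sub_round (a : ℝ) : distToInt a = |a - round a| := by
  apply le_antisymm
  · refine csInf_le ⟨0, ?_⟩ ⟨round a, rfl⟩
    rintro x ⟨m, rfl⟩
    exact abs_nonneg _
  · refine le_csInf ⟨_, ⟨round a, rfl⟩⟩ ?_
    rintro x ⟨m, rfl⟩
    exact round_le a m

lemma isLeast_nint (a : ℝ) : IsLeast {m : ℤ | |a - m| = distToInt a} (nint a) := by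
  have hround : round a ∈ {m : ℤ | |a - m| = distToInt a} :=
    (distToInt_eq_abs_sub_round a).symm
  have hbdd : BddBelow {m : ℤ | |a - m| = distToInt a} := by
    refine ⟨round a - 1, fun m hm => ?_⟩
    have hm_le : |a - m| ≤ 1 / 2 := by
      rw [show |a - m| = distToInt a from hm, distToInt_eq_abs_sub_round]
      exact abs_sub_round a
    have := abs_le.mp (abs_sub_round a)
    have := abs_le.mp hm_le
    have : ((round a : ℤ) : ℝ) - 1 ≤ m := by linarith
    exact_mod_cast this
  exact ⟨Int.csInf_mem ⟨_, hround⟩ hbdd, fun m hm => csInf_le hbdd hm⟩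

lemma distToInt_add_intCast (a : ℝ) (k : ℤ) : distToInt (a + k) = distToInt a := by
  unfold distToInt
  congr 1
  ext x
  constructor
  · rintro ⟨m, rfl⟩
    exact ⟨m - k, by push_cast; ring_nf⟩
  · rintro ⟨m, rfl⟩
    exact ⟨m + k, by push_cast; ring_nf⟩

lemma nint_add_intCast (a : ℝ) (k : ℤ) : nint (a + k) = nint a + k := by
  have hmem : ∀ m : ℤ, |a + k - m| = distToInt (a + k) ↔ |a - ↑(m - k)| = distToInt a := by
    intro m
    rw [distToInt_add_intCast]
    push_cast
    ring_nf
  have hleast := isLeast_nint a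
  refine (IsLeast.csInf_eq ⟨?_, fun m hm => ?_⟩ : _ = nint a + k)
  · show |a + k - ↑(nint a + k)| = _
    rw [hmem]
    simpa using hleast.1
  · have := hleast.2 ((hmem m).mp hm)
    omega

namespace GP

variable {d : ℕ}

lemma zero (hd : 1 ≤ d) : GP d (fun _ => 0) := by
  have h1 : GP 1 (fun _ => 0) := by simpa using GP.base 0
  rcases hd.lt_or_eq with hd | rfl
  · exact h1.incl hd
  · exact h1

lemma sum (hd : 1 ≤ d) {ι : Type*} (s : Finset ι) {f : ι → ℤ → ℝ}
    (hf : ∀ i ∈ s, GP d (f i)) : GP d (fun n => ∑ i ∈ s, f i n) := by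
  classical
  induction s using Finset.induction_on with
  | empty => simpa using GP.zero hd
  | insert i s hi ih =>
    simp_rw [Finset.sum_insert hi]
    exact (hf i (s.mem_insert_self i)).add (ih fun j hj => hf j (Finset.mem_insert_of_mem hj))

lemma sub_nint {f : ℤ → ℝ} (hf : GP d f) : GP d (fun n => f n - nint (f n)) := by
  simpa [sub_eq_add_neg] using hf.add (hf.ceil.smul (-1))

end GP

lemma SW.sub_nint_mul_sub_nint {r t : ℕ} (hr : 1 ≤ r) (ht : 1 ≤ t) {p q : ℤ → ℝ}
    (hp : GP r p) (hq : GP t q) :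
    SW (r + t) (fun n => (p n - nint (p n)) * (q n - nint (q n))) := by
  refine ⟨2, ![r, t], ![p, q], le_rfl, ?_, ?_, ?_, ?_⟩
  · intro i; fin_cases i <;> simpa
  · intro i; fin_cases i <;> simpa
  · simp [Fin.sum_univ_two]
  · funext n; simp [Fin.prod_univ_two]

namespace Wset

variable {d : ℕ} {f g : ℤ → ℝ}

lemma add_mem (hf : f ∈ Wset d) (hg : g ∈ Wset d) : f + g ∈ Wset d := by
  obtain ⟨m, c, u, hm, hu, rfl⟩ := hf
  obtain ⟨m', c', u', -, hu', rfl⟩ := hg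
  refine ⟨m + m', Fin.append c c', Fin.append u u', by omega, ?_, ?_⟩
  · intro j
    refine Fin.addCases (fun i => ?_) (fun i => ?_) j <;> simp [hu, hu']
  · funext n
    simp [Fin.sum_univ_add]

lemma smul_mem (a : ℝ) (hf : f ∈ Wset d) : a • f ∈ Wset d := by
  obtain ⟨m, c, u, hm, hu, rfl⟩ := hf
  refine ⟨m, a • c, u, hm, hu, ?_⟩
  funext n
  simp [Finset.mul_sum, mul_assoc]

lemma zero_mem (hd : 2 ≤ d) : 0 ∈ Wset d := by
  obtain ⟨e, rfl⟩ : ∃ e, d = e + 1 + 1 := ⟨d - 2, by omega⟩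
  have hsw := SW.sub_nint_mul_sub_nint (by omega) le_rfl (GP.zero (d := e + 1) (by omega))
    (GP.zero le_rfl)
  exact ⟨1, 0, fun _ => _, le_rfl, fun _ => hsw, by funext n; simp⟩

end Wset

/-- For `d < 2` the set `Wset d` is empty: its products have `ℓ ≥ 2` factors of degree `≥ 1`. -/
def wSubmodule (d : ℕ) (hd : 2 ≤ d) : Submodule ℝ (ℤ → ℝ) where
  carrier := Wset d
  add_mem' := Wset.add_mem
  zero_mem' := Wset.zero_mem hd
  smul_mem' := fun a _ => Wset.smul_mem a

lemma SW.mem_Wset {d : ℕ} {g : ℤ → ℝ} (hg : SW d g) : g ∈ Wset d :=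
  ⟨1, fun _ => 1, fun _ => g, le_rfl, fun _ => hg, by funext n; simp⟩

lemma GPequiv.of_mem_Wset {d : ℕ} (hd : 2 ≤ d) {q₁ q₂ h : ℤ → ℝ} (hW : h ∈ Wset d)
    (hint : ∀ n, ∃ m : ℤ, q₂ n - q₁ n - h n = m) : GPequiv d q₁ q₂ :=
  ⟨fun _ => 0, h, GP.zero (by omega), hW, fun n => by simpa using hint n⟩

section

variable {r t : ℕ} (hr : 1 ≤ r) (ht : 1 ≤ t) {p q : ℤ → ℝ} (hp : GP r p)
include hr ht hp

lemma GPequiv.mul_nint (hq : GP t q) :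
    GPequiv (r + t) (fun n => p n * nint (q n)) (fun n => (p n - nint (p n)) * q n) :=
  GPequiv.of_mem_Wset (by omega) (SW.sub_nint_mul_sub_nint hr ht hp hq).mem_Wset
    fun n => ⟨-(nint (p n) * nint (q n)), by push_cast; ring⟩

lemma GPequiv.mul_nint_sum {k : ℕ} {qi : Fin k → ℤ → ℝ} (hqi : ∀ i, GP t (qi i))
    (hsum : ∀ n, q n = ∑ i, qi i n) :
    GPequiv (r + t) (fun n => p n * nint (q n)) (fun n => ∑ i, p n * nint (qi i n)) := by
  set g : ℤ → ℝ := fun n => ∑ i, (qi i n - nint (qi i n)) with hg_def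
  have hg : GP t g := GP.sum ht _ fun i _ => (hqi i).sub_nint
  have hnint (n : ℤ) : (nint (q n) : ℝ) = nint (g n) + ∑ i, (nint (qi i n) : ℝ) := by
    have hq_eq : q n = g n + ((∑ i, nint (qi i n) : ℤ) : ℝ) := by
      simp [hsum n, hg_def]
    rw [hq_eq, nint_add_intCast]
    push_cast
    rfl
  let W := wSubmodule (r + t) (by omega)
  have hpg : (fun n => (p n - nint (p n)) * (g n - nint (g n))) ∈ W :=
    (SW.sub_nint_mul_sub_nint hr ht hp hg).mem_Wset
  have hpqi : ∑ i, (fun n => (p n - nint (p n)) * (qi i n - nint (qi i n))) ∈ W :=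
    W.sum_mem fun i _ => (SW.sub_nint_mul_sub_nint hr ht hp (hqi i)).mem_Wset
  refine GPequiv.of_mem_Wset (by omega) (W.sub_mem hpg hpqi)
    fun n => ⟨-(nint (p n) * nint (g n)), ?_⟩
  have hfactor : ∑ i, (p n - nint (p n)) * (qi i n - nint (qi i n)) = (p n - nint (p n)) * g n :=
    (Finset.mul_sum ..).symm
  simp only [Pi.sub_apply, Finset.sum_apply, hfactor, hnint, ← Finset.mul_sum]
  push_cast
  ring

end

theorem stmt_14 (r t : ℕ) (hr : 1 ≤ r) (ht : 1 ≤ t)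
    (p q : ℤ → ℝ) (hp : GP r p) (hq : GP t q) :
    GPequiv (r + t) (fun n => p n * (nint (q n) : ℝ))
      (fun n => (p n - (nint (p n) : ℝ)) * q n) ∧
    ∀ (k : ℕ) (qi : Fin k → ℤ → ℝ), (∀ i, GP t (qi i)) →
      (∀ n, q n = ∑ i, qi i n) →
      GPequiv (r + t) (fun n => p n * (nint (q n) : ℝ))
        (fun n => ∑ i, p n * (nint (qi i n) : ℝ)) :=
  ⟨GPequiv.mul_nint hr ht hp hq, fun _ _ hqi hsum => GPequiv.mul_nint_sum hr ht hp hqi hsum⟩
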